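/- Let d ≥ 5 and m ≥ 2, and let G = P_m □ Q_d. For each i ∈ {1,…,m} let M_i be a matching of the i-th canonical copy of Q_d in G, and let M be the union of the M_i. Let u be a vertex of the 1st canonical copy and v a vertex of the m-th canonical copy, of opposite global parity. Assume Conjecture B holds for dimension d. Then there exists a Hamilton path of G between u and v extending M if and only if no sequence of half-layers of G contained in M covers both u and v. -/

import Mathlib

open SimpleGraph

/-- The hypercube graph `Q_n` on binary strings of length `n`:
two strings are adjacent iff they differ in exactly one coordinate. -/
def Qc (n : ℕ) : SimpleGraph (Fin n → Bool) where
  Adj u v := (Finset.univ.filter fun i => u i ≠ v i).card = 1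
  symm := by
    constructor
    intro u v h
    have hset : (Finset.univ.filter fun i => v i ≠ u i)
        = (Finset.univ.filter fun i => u i ≠ v i) :=
      Finset.filter_congr (fun i _ => by simp [ne_comm])
    rw [hset]; exact h
  loopless := by
    constructor
    intro u h
    simp at h

/-- The parity (weight mod 2) of a vertex of the hypercube. -/
def wt {n : ℕ} (u : Fin n → Bool) : ZMod 2 :=
  ((Finset.univ.filter fun i => u i = true).card : ZMod 2)

/-- The neighbor of `u` obtained by flipping coordinate `i`. -/
def flipCoord {n : ℕ} (u : Fin n → Bool) (i : Fin n) : Fin n → Bool :=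
  Function.update u i (!u i)

/-- `M` is a matching of the graph `G`: a set of pairwise non-incident edges of `G`. -/
def IsMatchingOn {V : Type*} (G : SimpleGraph V) (M : Set (Sym2 V)) : Prop :=
  M ⊆ G.edgeSet ∧ ∀ e ∈ M, ∀ f ∈ M, e ≠ f → ∀ v : V, v ∈ e → v ∉ f

/-- A vertex is covered by a set of edges if it is an endpoint of one of them. -/
def coveredBy {V : Type*} (M : Set (Sym2 V)) (v : V) : Prop :=
  ∃ e ∈ M, v ∈ e

/-- There is a Hamilton path of `G` between `u` and `v` whose edge set contains `M`. -/
def ExtendsHamPath {V : Type*} [DecidableEq V] (G : SimpleGraph V) (M : Set (Sym2 V)) (u v : V) : Prop :=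
  ∃ p : G.Walk u v, p.IsHamiltonian ∧ ∀ e ∈ M, e ∈ p.edges

/-- There is a Hamilton cycle of `G` whose edge set contains `M`. -/
def ExtendsHamCycle {V : Type*} [DecidableEq V] (G : SimpleGraph V) (M : Set (Sym2 V)) : Prop :=
  ∃ (a : V) (c : G.Walk a a), c.IsHamiltonianCycle ∧ ∀ e ∈ M, e ∈ c.edges

/-- The set of directions (coordinates where the endpoints differ) of an edge. -/
def edgeDirs {n : ℕ} (e : Sym2 (Fin n → Bool)) : Finset (Fin n) :=
  Sym2.lift ⟨fun u v => Finset.univ.filter fun i => u i ≠ v i, fun u v =>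
    Finset.filter_congr (fun i _ => by simp [ne_comm])⟩ e

/-- The edges of `M` lie in at most `d` distinct directions. -/
def SpansAtMost {n : ℕ} (M : Set (Sym2 (Fin n → Bool))) (d : ℕ) : Prop :=
  ∃ D : Finset (Fin n), D.card ≤ d ∧ ∀ e ∈ M, edgeDirs e ⊆ D

/-- The half-layer in direction `i` of parity `p`: all edges of `Q_n` in direction `i`
whose base (the endpoint with `i`-th coordinate `false`) has parity `p`. -/
def halfLayer (n : ℕ) (i : Fin n) (p : ZMod 2) : Set (Sym2 (Fin n → Bool)) :=
  {e | ∃ u : Fin n → Bool, u i = false ∧ wt u = p ∧ e = s(u, flipCoord u i)}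

/-- Condition C1: `M` contains a half-layer covering both `u` and `v`. -/
def CondC1 {n : ℕ} (M : Set (Sym2 (Fin n → Bool))) (u v : Fin n → Bool) : Prop :=
  ∃ (i : Fin n) (p : ZMod 2), halfLayer n i p ⊆ M ∧
    coveredBy (halfLayer n i p) u ∧ coveredBy (halfLayer n i p) v

/-- Condition C2: `v = u^i`, `M` contains a `u`-avoiding almost half-layer in direction `i`,
and there is `j ≠ i` with `u u^j ∈ M` and `v v^j ∈ M`. -/
def CondC2 {n : ℕ} (M : Set (Sym2 (Fin n → Bool))) (u v : Fin n → Bool) : Prop :=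
  ∃ i : Fin n, v = flipCoord u i ∧
    (∃ (p : ZMod 2) (e₀ : Sym2 (Fin n → Bool)), e₀ ∈ halfLayer n i p ∧ u ∈ e₀ ∧
      halfLayer n i p \ {e₀} ⊆ M) ∧
    ∃ j : Fin n, j ≠ i ∧ s(u, flipCoord u j) ∈ M ∧ s(v, flipCoord v j) ∈ M

/-- Condition C3: `uv ∈ M`. -/
def CondC3 {n : ℕ} (M : Set (Sym2 (Fin n → Bool))) (u v : Fin n → Bool) : Prop :=
  s(u, v) ∈ M

/-- None of the C-conditions holds for `M`, `u`, `v`. -/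
def NoneC {n : ℕ} (M : Set (Sym2 (Fin n → Bool))) (u v : Fin n → Bool) : Prop :=
  ¬ CondC1 M u v ∧ ¬ CondC2 M u v ∧ ¬ CondC3 M u v

/-- Conjecture A for dimension `d`: for every matching `M` of `Q_d` and vertices `u`, `v`
of opposite parity with `u` not covered by `M`, there is a Hamilton path between `u` and `v`
extending `M`. -/
def ConjA (d : ℕ) : Prop :=
  ∀ M : Set (Sym2 (Fin d → Bool)), IsMatchingOn (Qc d) M →
    ∀ u v : Fin d → Bool, wt u ≠ wt v → ¬ coveredBy M u →
      ExtendsHamPath (Qc d) M u v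

/-- Conjecture B for dimension `d`: for every matching `M` of `Q_d` and vertices `u`, `v`
of opposite parity, a Hamilton path between `u` and `v` extending `M` exists iff none of
the C-conditions holds. -/
def ConjB (d : ℕ) : Prop :=
  ∀ M : Set (Sym2 (Fin d → Bool)), IsMatchingOn (Qc d) M →
    ∀ u v : Fin d → Bool, wt u ≠ wt v →
      (ExtendsHamPath (Qc d) M u v ↔ NoneC M u v)

/-- There exist at least two distinct Hamilton paths of `G` between `u` and `v`
extending `M`. -/
def TwoHamPaths {V : Type*} [DecidableEq V] (G : SimpleGraph V) (M : Set (Sym2 V)) (u v : V) : Prop :=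
  ∃ p₁ p₂ : G.Walk u v, p₁.IsHamiltonian ∧ (∀ e ∈ M, e ∈ p₁.edges) ∧
    p₂.IsHamiltonian ∧ (∀ e ∈ M, e ∈ p₂.edges) ∧ p₁ ≠ p₂

/-- Conjecture C for dimension `d`: none of the C-conditions holds iff there exist two
distinct Hamilton paths between `u` and `v` extending `M`. -/
def ConjC (d : ℕ) : Prop :=
  ∀ M : Set (Sym2 (Fin d → Bool)), IsMatchingOn (Qc d) M →
    ∀ u v : Fin d → Bool, wt u ≠ wt v →
      (NoneC M u v ↔ TwoHamPaths (Qc d) M u v)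

/-- The copy of a set of edges of `Q_d` inside the `i`-th canonical copy of `Q_d`
in `P_m □ Q_d`. -/
def liftEdges {m d : ℕ} (i : Fin m) (M : Set (Sym2 (Fin d → Bool))) :
    Set (Sym2 (Fin m × (Fin d → Bool))) :=
  (Sym2.map fun x => (i, x)) '' M

/-- The global parity of a vertex of `P_m □ Q_d`. -/
def gwt {m d : ℕ} (v : Fin m × (Fin d → Bool)) : ZMod 2 :=
  (v.1.val : ZMod 2) + wt v.2

/-- The sequence of half-layers of `P_m □ Q_d` in direction `k` of global parity `p`:
all edges of the canonical copies lying in direction `k` whose base has global parity `p`. -/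
def seqHalfLayer (m d : ℕ) (k : Fin d) (p : ZMod 2) :
    Set (Sym2 (Fin m × (Fin d → Bool))) :=
  {e | ∃ (i : Fin m) (x : Fin d → Bool), x k = false ∧ gwt (i, x) = p ∧
    e = s((i, x), (i, flipCoord x k))}

/-- `M` is a maximal matching of `G`. -/
def IsMaximalMatchingOn {V : Type*} (G : SimpleGraph V) (M : Set (Sym2 V)) : Prop :=
  IsMatchingOn G M ∧ ∀ e : Sym2 V, IsMatchingOn G (insert e M) → e ∈ M

/-- The set `(M \ {uu^M, vv^M}) ∪ {u^M v^M}`, where the removed edges are those of `M`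
incident to `u` or `v`, and the edge `u^M v^M` is present exactly when both `u` and `v`
are covered by `M`. -/
def reducedM {n : ℕ} (M : Set (Sym2 (Fin n → Bool))) (u v : Fin n → Bool) :
    Set (Sym2 (Fin n → Bool)) :=
  {e | e ∈ M ∧ u ∉ e ∧ v ∉ e} ∪
    {f | ∃ a b : Fin n → Bool, s(u, a) ∈ M ∧ s(v, b) ∈ M ∧ f = s(a, b)}

/-- The complete bipartite graph `B(Q_n)` on the vertices of `Q_n`: two vertices are
adjacent iff they have opposite parity. -/
def Bgraph (n : ℕ) : SimpleGraph (Fin n → Bool) where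
  Adj u v := wt u ≠ wt v
  symm := ⟨fun _ _ h => h.symm⟩
  loopless := ⟨fun _ h => h rfl⟩

/-!
A Hamilton path extending `M` cannot join two vertices covered by a sequence `S ⊆ M` of
half-layers: `S` covers exactly half of the vertices, pairing them up along the path, and every
uncovered vertex needs its own path-edge to a covered vertex other than the two ends.

Conversely, the path is built copy by copy. A Hamilton path of the first `n + 1` copies ending at
`(n, a)` continues along the edge to `(n + 1, a)` and then along a Hamilton path of the last copy
from `a`, which Conjecture B provides when no C-condition holds. On either side the obstructions
forbid one value of `coverParity k a` in a single direction `k` (that of a half-layer, or of a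
sequence of half-layers, through the other end), or else at most two vertices `a`. In dimension
at least five some `a` of the right parity avoids both sides, unless they forbid both values in
the same direction, and that is a sequence of half-layers covering both ends.
-/

open Finset

section Cube

variable {d : ℕ}

lemma flipCoord_apply_self (x : Fin d → Bool) (i : Fin d) : flipCoord x i i = !x i :=
  Function.update_self i _ x

lemma flipCoord_apply_of_ne (x : Fin d → Bool) {i j : Fin d} (h : j ≠ i) :
    flipCoord x i j = x j :=
  Function.update_of_ne h _ x

@[simp]
lemma flipCoord_flipCoord (x : Fin d → Bool) (i : Fin d) : flipCoord (flipCoord x i) i = x := by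
  simp [flipCoord]

lemma flipCoord_injective (x : Fin d → Bool) : Function.Injective (flipCoord x) := by
  intro i j h
  by_contra hij
  simpa [flipCoord_apply_self, flipCoord_apply_of_ne x hij] using congrFun h i

lemma wt_flipCoord (x : Fin d → Bool) (i : Fin d) : wt (flipCoord x i) = wt x + 1 := by
  have key : ∀ y : Fin d → Bool, y i = false →
      wt (flipCoord y i) = wt y + 1 := by
    intro y hy
    have : univ.filter (flipCoord y i · = true) = insert i (univ.filter (y · = true)) := by
      ext j
      by_cases hj : j = i
      · subst hj; simp [flipCoord_apply_self, hy]
      · simp [flipCoord_apply_of_ne y hj, hj]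
    rw [wt, wt, this, card_insert_of_notMem (by simp [hy])]
    push_cast; rfl
  cases hx : x i
  · exact key x hx
  · have := key (flipCoord x i) (by simp [flipCoord_apply_self, hx])
    rw [flipCoord_flipCoord] at this
    grind

lemma qc_adj_iff {x y : Fin d → Bool} : (Qc d).Adj x y ↔ ∃ i, y = flipCoord x i := by
  change #{i | x i ≠ y i} = 1 ↔ _
  rw [card_eq_one]
  constructor
  · rintro ⟨i, hi⟩
    refine ⟨i, funext fun j => ?_⟩
    have hj := congrArg (j ∈ ·) hi
    simp only [mem_filter, mem_univ, true_and, mem_singleton, eq_iff_iff] at hj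
    by_cases hji : j = i
    · subst hji; cases hx : x j <;> cases hy : y j <;> simp_all [flipCoord_apply_self]
    · rw [flipCoord_apply_of_ne x hji]
      simpa [hji, eq_comm] using hj
  · rintro ⟨i, rfl⟩
    refine ⟨i, ext fun j => ?_⟩
    by_cases hji : j = i
    · subst hji; simp [flipCoord_apply_self]
    · simp [flipCoord_apply_of_ne x hji, hji]

end Cube

lemma zmod_two_eq_add_one_of_ne {a b : ZMod 2} (h : a ≠ b) : a = b + 1 := by
  revert a b; decide

lemma zmod_two_add_one_ne (a : ZMod 2) : a + 1 ≠ a := by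
  revert a; decide

section HalfLayer

variable {d : ℕ}

/-- `x` is covered by the half-layer in direction `k` of parity `coverParity k x`, the parity of
the base of the direction-`k` edge at `x`. -/
def coverParity (k : Fin d) (x : Fin d → Bool) : ZMod 2 :=
  wt x + if x k then 1 else 0

@[simp]
lemma coverParity_flipCoord_self (k : Fin d) (x : Fin d → Bool) :
    coverParity k (flipCoord x k) = coverParity k x := by
  unfold coverParity
  rw [wt_flipCoord, flipCoord_apply_self]
  cases x k <;> grind

lemma coverParity_flipCoord_of_ne {j k : Fin d} (h : j ≠ k) (x : Fin d → Bool) :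
    coverParity k (flipCoord x j) = coverParity k x + 1 := by
  unfold coverParity
  rw [wt_flipCoord, flipCoord_apply_of_ne x h.symm]
  ring

lemma mk_flipCoord_mem_halfLayer (k : Fin d) (x : Fin d → Bool) :
    s(x, flipCoord x k) ∈ halfLayer d k (coverParity k x) := by
  cases hx : x k
  · exact ⟨x, hx, by simp [coverParity, hx], rfl⟩
  · refine ⟨flipCoord x k, by simp [flipCoord_apply_self, hx], ?_, by simp [Sym2.eq_swap]⟩
    rw [← coverParity_flipCoord_self]
    simp [coverParity, flipCoord_apply_self, hx]

lemma eq_of_mem_halfLayer {e : Sym2 (Fin d → Bool)} {k : Fin d} {p : ZMod 2}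
    (he : e ∈ halfLayer d k p) {x : Fin d → Bool} (hx : x ∈ e) :
    coverParity k x = p ∧ e = s(x, flipCoord x k) := by
  obtain ⟨y, hyk, rfl, rfl⟩ := he
  rcases Sym2.mem_iff.mp hx with rfl | rfl
  · simp [coverParity, hyk]
  · refine ⟨?_, by simp [Sym2.eq_swap]⟩
    rw [coverParity_flipCoord_self]
    simp [coverParity, hyk]

lemma coveredBy_halfLayer_iff {k : Fin d} {p : ZMod 2} {x : Fin d → Bool} :
    coveredBy (halfLayer d k p) x ↔ coverParity k x = p := by
  constructor
  · rintro ⟨e, he, hx⟩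
    exact (eq_of_mem_halfLayer he hx).1
  · rintro rfl
    exact ⟨_, mk_flipCoord_mem_halfLayer k x, Sym2.mem_mk_left _ _⟩

end HalfLayer

lemma IsMatchingOn.eq_of_mem {V : Type*} {G : SimpleGraph V} {M : Set (Sym2 V)}
    (hM : IsMatchingOn G M) {a b c : V} (hb : s(a, b) ∈ M) (hc : s(a, c) ∈ M) : b = c := by
  by_contra hbc
  have hne : s(a, b) ≠ s(a, c) := fun h => hbc (Sym2.congr_right.mp h)
  exact hM.2 _ hb _ hc hne a (Sym2.mem_mk_left _ _) (Sym2.mem_mk_left _ _)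

lemma IsMatchingOn.eq_of_flipCoord_mem {d : ℕ} {M : Set (Sym2 (Fin d → Bool))}
    (hM : IsMatchingOn (Qc d) M)
    {x : Fin d → Bool} {i j : Fin d} (hi : s(x, flipCoord x i) ∈ M)
    (hj : s(x, flipCoord x j) ∈ M) : i = j :=
  flipCoord_injective x (hM.eq_of_mem hi hj)

section Conditions

variable {d : ℕ} {M : Set (Sym2 (Fin d → Bool))}

open scoped Classical in
noncomputable def coverDirs (M : Set (Sym2 (Fin d → Bool))) (x : Fin d → Bool) :
    Finset (Fin d) :=
  {k | halfLayer d k (coverParity k x) ⊆ M}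

lemma mem_coverDirs {x : Fin d → Bool} {k : Fin d} :
    k ∈ coverDirs M x ↔ halfLayer d k (coverParity k x) ⊆ M := by
  simp [coverDirs]

lemma card_coverDirs_le_one (hM : IsMatchingOn (Qc d) M) (x : Fin d → Bool) :
    #(coverDirs M x) ≤ 1 :=
  card_le_one.2 fun i hi j hj =>
    hM.eq_of_flipCoord_mem (mem_coverDirs.1 hi (mk_flipCoord_mem_halfLayer i x))
      (mem_coverDirs.1 hj (mk_flipCoord_mem_halfLayer j x))

/-- Otherwise a vertex at distance two from `x`, off both directions, would be matched along
both of them. -/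
lemma dir_eq_of_almost_halfLayer_subset (hd : 4 ≤ d) (hM : IsMatchingOn (Qc d) M)
    {x : Fin d → Bool} {i j : Fin d}
    (hi : halfLayer d i (coverParity i x) \ {s(x, flipCoord x i)} ⊆ M)
    (hj : halfLayer d j (coverParity j x) \ {s(x, flipCoord x j)} ⊆ M) : i = j := by
  by_contra hij
  obtain ⟨l, hl, l', hl', hll'⟩ := one_lt_card.1 (show 1 < #({i, j}ᶜ : Finset (Fin d)) by
    rw [card_compl, Fintype.card_fin, card_pair hij]; omega)
  simp only [mem_compl, mem_insert, mem_singleton, not_or] at hl hl'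
  set y := flipCoord (flipCoord x l) l' with hy_def
  have hyl' : y l' = !x l' := by
    rw [hy_def, flipCoord_apply_self, flipCoord_apply_of_ne x hll'.symm]
  have hy : ∀ t, l ≠ t → l' ≠ t →
      halfLayer d t (coverParity t x) \ {s(x, flipCoord x t)} ⊆ M → s(y, flipCoord y t) ∈ M := by
    intro t htl htl' ht
    have hcp : coverParity t y = coverParity t x := by
      rw [coverParity_flipCoord_of_ne htl', coverParity_flipCoord_of_ne htl]; grind
    refine ht ⟨hcp ▸ mk_flipCoord_mem_halfLayer t y, fun h => ?_⟩
    have : y ∈ s(x, flipCoord x t) := (Set.mem_singleton_iff.1 h) ▸ Sym2.mem_mk_left _ _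
    rcases Sym2.mem_iff.1 this with h | h <;>
      simpa [hyl', flipCoord_apply_of_ne x htl'] using congrFun h l'
  exact hij (hM.eq_of_flipCoord_mem (hy i hl.1 hl'.1 hi) (hy j hl.2 hl'.2 hj))

lemma exists_of_condC2 {x y : Fin d → Bool} (h : CondC2 M x y ∨ CondC2 M y x) :
    ∃ i, y = flipCoord x i ∧ halfLayer d i (coverParity i x) \ {s(x, flipCoord x i)} ⊆ M ∧
      ∃ j ≠ i, s(x, flipCoord x j) ∈ M := by
  rcases h with ⟨i, rfl, ⟨p, e, he, hxe, hsub⟩, j, hji, hxj, -⟩ |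
    ⟨i, rfl, ⟨p, e, he, hye, hsub⟩, j, hji, -, hxj⟩
  · obtain ⟨rfl, rfl⟩ := eq_of_mem_halfLayer he hxe
    exact ⟨i, rfl, hsub, j, hji, hxj⟩
  · obtain ⟨rfl, rfl⟩ := eq_of_mem_halfLayer he hye
    refine ⟨i, by simp, ?_, j, hji, hxj⟩
    simpa [Sym2.eq_swap] using hsub

lemma noneC_of_forall_coverParity_ne {x y : Fin d → Bool}
    (hdirs : ∀ k ∈ coverDirs M x, coverParity k y ≠ coverParity k x)
    (hC2 : ¬ (CondC2 M x y ∨ CondC2 M y x)) (hC3 : s(x, y) ∉ M) :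
    NoneC M x y ∧ NoneC M y x := by
  have hC1 : ∀ i p, halfLayer d i p ⊆ M → coveredBy (halfLayer d i p) x →
      ¬ coveredBy (halfLayer d i p) y := by
    intro i p hsub hx hy
    rw [coveredBy_halfLayer_iff] at hx hy
    subst hx
    exact hdirs i (mem_coverDirs.2 hsub) hy
  exact ⟨⟨fun ⟨i, p, hs, hx, hy⟩ => hC1 i p hs hx hy, fun h => hC2 (Or.inl h), hC3⟩,
    ⟨fun ⟨i, p, hs, hy, hx⟩ => hC1 i p hs hx hy, fun h => hC2 (Or.inr h),
      fun h => hC3 (by rwa [CondC3, Sym2.eq_swap] at h)⟩⟩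

lemma exists_noneC (hd : 4 ≤ d) (hM : IsMatchingOn (Qc d) M) (x : Fin d → Bool) :
    ∃ bad : Finset (Fin d → Bool), #bad + 2 * #(coverDirs M x) ≤ 2 ∧
      ∀ y ∉ bad, (∀ k ∈ coverDirs M x, coverParity k y ≠ coverParity k x) →
        NoneC M x y ∧ NoneC M y x := by
  classical
  rcases (coverDirs M x).eq_empty_or_nonempty with hempty | ⟨k, hk⟩
  · refine ⟨({y | ∃ i, y = flipCoord x i ∧
        halfLayer d i (coverParity i x) \ {s(x, flipCoord x i)} ⊆ M} : Finset _) ∪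
        ({y | s(x, y) ∈ M} : Finset _), ?_, fun y hy hdirs => ?_⟩
    · rw [hempty, card_empty]
      refine (card_union_le _ _).trans (add_le_add (card_le_one.2 ?_) (card_le_one.2 ?_))
      · simp only [mem_filter, mem_univ, true_and]
        rintro _ ⟨i, rfl, hi⟩ _ ⟨j, rfl, hj⟩
        rw [dir_eq_of_almost_halfLayer_subset hd hM hi hj]
      · simp only [mem_filter, mem_univ, true_and]
        exact fun _ ha _ hb => hM.eq_of_mem ha hb
    · simp only [mem_union, mem_filter, mem_univ, true_and, not_or, not_exists, not_and] at hy
      refine noneC_of_forall_coverParity_ne hdirs (fun h => ?_) hy.2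
      obtain ⟨i, rfl, hi, -⟩ := exists_of_condC2 h
      exact hy.1 i rfl hi
  · have hkM := mem_coverDirs.1 hk
    have hxk : s(x, flipCoord x k) ∈ M := hkM (mk_flipCoord_mem_halfLayer k x)
    refine ⟨∅, by rw [card_empty]; have := card_coverDirs_le_one hM x; omega, fun y _ hdirs =>
      noneC_of_forall_coverParity_ne hdirs (fun h => ?_) (fun h => ?_)⟩
    · obtain ⟨i, rfl, hi, j, hji, hj⟩ := exists_of_condC2 h
      have hik : i = k :=
        dir_eq_of_almost_halfLayer_subset hd hM hi (Set.sdiff_subset.trans hkM)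
      exact hji ((hM.eq_of_flipCoord_mem hj hxk).trans hik.symm)
    · apply hdirs k hk
      rw [hM.eq_of_mem h hxk, coverParity_flipCoord_self]

end Conditions

section Vertices

variable {d : ℕ}

def flipSet (x : Fin d → Bool) (T : Finset (Fin d)) : Fin d → Bool :=
  fun j => if j ∈ T then !x j else x j

lemma flipSet_insert (x : Fin d → Bool) {T : Finset (Fin d)} {j : Fin d} (hj : j ∉ T) :
    flipSet x (insert j T) = flipCoord (flipSet x T) j := by
  funext i
  by_cases hij : i = j
  · subst hij; simp [flipSet, flipCoord_apply_self, hj]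
  · simp [flipSet, flipCoord_apply_of_ne _ hij, hij]

lemma wt_flipSet (x : Fin d → Bool) (T : Finset (Fin d)) : wt (flipSet x T) = wt x + #T := by
  induction T using Finset.induction_on with
  | empty => simp [show flipSet x ∅ = x from funext fun j => by simp [flipSet]]
  | insert j T hj ih =>
    rw [flipSet_insert x hj, wt_flipCoord, ih, card_insert_of_notMem hj]
    push_cast; ring

lemma flipSet_injective (x : Fin d → Bool) : Function.Injective (flipSet x) := by
  intro T T' h
  ext j
  have := congrFun h j
  by_cases hT : j ∈ T <;> by_cases hT' : j ∈ T' <;> simp_all [flipSet]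

/-- Flipping pairs of free coordinates of one solution gives `(d - #K).choose 2` of them. -/
lemma exists_eqOn_wt_eq_notMem (K : Finset (Fin d)) (c : Fin d → Bool) (r : ZMod 2)
    {bad : Finset (Fin d → Bool)} (hbad : #bad < (d - #K).choose 2) :
    ∃ x, (∀ k ∈ K, x k = c k) ∧ wt x = r ∧ x ∉ bad := by
  have hKc : #Kᶜ = d - #K := by rw [card_compl, Fintype.card_fin]
  obtain ⟨j, hj⟩ : Kᶜ.Nonempty := by
    rw [← card_pos, hKc]
    by_contra h
    rw [Nat.choose_eq_zero_of_lt (by omega)] at hbad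
    omega
  obtain ⟨x₀, hx₀K, hx₀r⟩ : ∃ x₀ : Fin d → Bool, (∀ k ∈ K, x₀ k = c k) ∧ wt x₀ = r := by
    by_cases h : wt c = r
    · exact ⟨c, fun _ _ => rfl, h⟩
    · refine ⟨flipCoord c j, fun k hk => flipCoord_apply_of_ne c ?_, ?_⟩
      · rintro rfl; exact mem_compl.1 hj hk
      · rw [wt_flipCoord, zmod_two_eq_add_one_of_ne h]; grind
  obtain ⟨x, hx, hxbad⟩ := exists_mem_notMem_of_card_lt_card
    (t := (Kᶜ.powersetCard 2).image (flipSet x₀)) (s := bad)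
    (by rwa [card_image_of_injective _ (flipSet_injective x₀), card_powersetCard, hKc])
  obtain ⟨T, hT, rfl⟩ := mem_image.1 hx
  rw [mem_powersetCard] at hT
  refine ⟨flipSet x₀ T, fun k hk => ?_, ?_, hxbad⟩
  · have : k ∉ T := fun h => mem_compl.1 (hT.1 h) hk
    simp [flipSet, this, hx₀K k hk]
  · rw [wt_flipSet, hT.2, hx₀r]; grind

/-- A constrained direction weighs as much as two excluded vertices because the count of
`exists_eqOn_wt_eq_notMem` gives `4 - 2 * #K < (5 - #K).choose 2` for `K = K₀ ∪ K₁`, `#K ≤ 2`. -/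
lemma exists_wt_eq_forall_coverParity_ne (hd : 5 ≤ d) {K₀ K₁ : Finset (Fin d)}
    {A₀ A₁ : Fin d → ZMod 2} {bad₀ bad₁ : Finset (Fin d → Bool)}
    (h₀ : #bad₀ + 2 * #K₀ ≤ 2) (h₁ : #bad₁ + 2 * #K₁ ≤ 2)
    (hA : ∀ k ∈ K₀, k ∈ K₁ → A₀ k = A₁ k) (r : ZMod 2) :
    ∃ y, wt y = r ∧ (y ∉ bad₀ ∧ ∀ k ∈ K₀, coverParity k y ≠ A₀ k) ∧
      (y ∉ bad₁ ∧ ∀ k ∈ K₁, coverParity k y ≠ A₁ k) := by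
  classical
  set A : Fin d → ZMod 2 := fun k => if k ∈ K₀ then A₀ k else A₁ k
  have hcard : #(bad₀ ∪ bad₁) < (d - #(K₀ ∪ K₁)).choose 2 := by
    have hb := card_union_le bad₀ bad₁
    have hK := card_union_le K₀ K₁
    have h5 := Nat.choose_le_choose 2 (show 5 - #(K₀ ∪ K₁) ≤ d - #(K₀ ∪ K₁) by omega)
    have key : ∀ a ≤ 2, 2 * (2 - a) < (5 - a).choose 2 := by decide
    have := key #(K₀ ∪ K₁) (by omega)
    omega
  obtain ⟨y, hyK, hyr, hybad⟩ :=
    exists_eqOn_wt_eq_notMem (K₀ ∪ K₁) (fun k => decide (A k = r)) r hcard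
  have hne : ∀ k ∈ K₀ ∪ K₁, coverParity k y ≠ A k := fun k hk => by
    rw [coverParity, hyr, hyK k hk]
    by_cases h : A k = r
    · simp [h]
    · simpa [h] using Ne.symm h
  rw [mem_union, not_or] at hybad
  refine ⟨y, hyr, ⟨hybad.1, fun k hk => ?_⟩, ⟨hybad.2, fun k hk => ?_⟩⟩
  · simpa [A, hk] using hne k (mem_union_left _ hk)
  · by_cases hk₀ : k ∈ K₀
    · simpa [A, hk₀, hA k hk₀ hk] using hne k (mem_union_left _ hk₀)
    · simpa [A, hk₀] using hne k (mem_union_right _ hk)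

end Vertices

namespace SimpleGraph.Walk.IsPath

variable {V : Type*} {G : SimpleGraph V} {u v : V} {p : G.Walk u v}

lemma eq_of_toSubgraph_adj_start (hp : p.IsPath) {a b : V} (ha : p.toSubgraph.Adj u a)
    (hb : p.toSubgraph.Adj u b) : a = b :=
  (hp.snd_of_toSubgraph_adj ha).symm.trans (hp.snd_of_toSubgraph_adj hb)

lemma eq_of_toSubgraph_adj_end (hp : p.IsPath) {a b : V} (ha : p.toSubgraph.Adj v a)
    (hb : p.toSubgraph.Adj v b) : a = b :=
  hp.reverse.eq_of_toSubgraph_adj_start (by rwa [toSubgraph_reverse])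
    (by rwa [toSubgraph_reverse])

lemma exists_neighborSet_toSubgraph_eq_pair (hp : p.IsPath) {w : V} (hw : w ∈ p.support)
    (hwu : w ≠ u) (hwv : w ≠ v) : ∃ a b, a ≠ b ∧ p.toSubgraph.neighborSet w = {a, b} := by
  obtain ⟨i, rfl, hi⟩ := mem_support_iff_exists_getVert.1 hw
  have h0 : i ≠ 0 := by rintro rfl; exact hwu p.getVert_zero
  have hlt : i < p.length := lt_of_le_of_ne hi (by rintro rfl; exact hwv p.getVert_length)
  exact Set.ncard_eq_two.1 (hp.ncard_neighborSet_toSubgraph_internal_eq_two h0 hlt)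

end SimpleGraph.Walk.IsPath

section Product

variable {m d : ℕ}

/-- `w` is covered by the sequence of half-layers in direction `k` of global parity
`seqCoverParity k w`. -/
def seqCoverParity (k : Fin d) (w : Fin m × (Fin d → Bool)) : ZMod 2 :=
  (w.1.val : ZMod 2) + coverParity k w.2

lemma mk_mem_iUnion_liftEdges_iff {Ms : Fin m → Set (Sym2 (Fin d → Bool))} {i : Fin m}
    {x y : Fin d → Bool} : s((i, x), (i, y)) ∈ ⋃ j, liftEdges j (Ms j) ↔ s(x, y) ∈ Ms i := by
  simp only [Set.mem_iUnion, liftEdges, Set.mem_image]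
  constructor
  · rintro ⟨j, e, he, hej⟩
    induction e using Sym2.ind with
    | _ a b =>
      simp only [Sym2.map_mk, Sym2.eq, Sym2.rel_iff', Prod.mk.injEq] at hej
      rcases hej with ⟨⟨rfl, rfl⟩, -, rfl⟩ | ⟨⟨rfl, rfl⟩, -, rfl⟩
      · exact he
      · rwa [Sym2.eq_swap]
  · exact fun h => ⟨i, _, h, rfl⟩

lemma liftEdges_subset_iUnion_liftEdges_iff {Ms : Fin m → Set (Sym2 (Fin d → Bool))}
    {i : Fin m} {A : Set (Sym2 (Fin d → Bool))} :
    liftEdges i A ⊆ ⋃ j, liftEdges j (Ms j) ↔ A ⊆ Ms i := by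
  constructor
  · intro h e he
    induction e using Sym2.ind with
    | _ a b => exact mk_mem_iUnion_liftEdges_iff.1 (h ⟨_, he, rfl⟩)
  · rintro h _ ⟨e, he, rfl⟩
    induction e using Sym2.ind with
    | _ a b => exact mk_mem_iUnion_liftEdges_iff.2 (h he)

lemma coveredBy_iUnion_liftEdges_iff {Ms : Fin m → Set (Sym2 (Fin d → Bool))}
    {w : Fin m × (Fin d → Bool)} :
    coveredBy (⋃ j, liftEdges j (Ms j)) w ↔ coveredBy (Ms w.1) w.2 := by
  constructor
  · rintro ⟨_, hf, hw⟩
    obtain ⟨j, e, he, rfl⟩ := Set.mem_iUnion.1 hf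
    obtain ⟨z, hz, rfl⟩ := Sym2.mem_map.1 hw
    exact ⟨e, he, hz⟩
  · rintro ⟨e, he, hw⟩
    exact ⟨_, Set.mem_iUnion.2 ⟨w.1, e, he, rfl⟩, Sym2.mem_map.2 ⟨w.2, hw, rfl⟩⟩

lemma seqHalfLayer_eq (k : Fin d) (p : ZMod 2) :
    seqHalfLayer m d k p = ⋃ i, liftEdges i (halfLayer d k (p + (i.val : ZMod 2))) := by
  ext e
  simp only [seqHalfLayer, gwt, Set.mem_ofPred_eq, Set.mem_iUnion, liftEdges, Set.mem_image,
    halfLayer]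
  constructor
  · rintro ⟨i, x, hx, hp, rfl⟩
    exact ⟨i, _, ⟨x, hx, by rw [← hp]; grind, rfl⟩, rfl⟩
  · rintro ⟨i, _, ⟨x, hx, hp, rfl⟩, rfl⟩
    exact ⟨i, x, hx, by rw [hp]; grind, rfl⟩

lemma seqHalfLayer_subset_iff {Ms : Fin m → Set (Sym2 (Fin d → Bool))} {k : Fin d}
    {p : ZMod 2} :
    seqHalfLayer m d k p ⊆ ⋃ i, liftEdges i (Ms i) ↔
      ∀ i : Fin m, halfLayer d k (p + (i.val : ZMod 2)) ⊆ Ms i := by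
  simp only [seqHalfLayer_eq, Set.iUnion_subset_iff, liftEdges_subset_iUnion_liftEdges_iff]

lemma coveredBy_seqHalfLayer_iff {k : Fin d} {p : ZMod 2} {w : Fin m × (Fin d → Bool)} :
    coveredBy (seqHalfLayer m d k p) w ↔ seqCoverParity k w = p := by
  rw [seqHalfLayer_eq, coveredBy_iUnion_liftEdges_iff, coveredBy_halfLayer_iff, seqCoverParity]
  constructor <;> intro h <;> grind

lemma mk_flipCoord_mem_seqHalfLayer (k : Fin d) (w : Fin m × (Fin d → Bool)) :
    s(w, (w.1, flipCoord w.2 k)) ∈ seqHalfLayer m d k (seqCoverParity k w) := by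
  rw [seqHalfLayer_eq]
  refine Set.mem_iUnion.2 ⟨w.1, _, ?_, Sym2.map_mk _ w.2 _⟩
  convert mk_flipCoord_mem_halfLayer k w.2 using 2
  simp only [seqCoverParity]; grind

lemma seqCoverParity_of_adj {k : Fin d} {w z : Fin m × (Fin d → Bool)}
    (h : (pathGraph m □ Qc d).Adj w z) (hz : z ≠ (w.1, flipCoord w.2 k)) :
    seqCoverParity k z = seqCoverParity k w + 1 := by
  rcases boxProd_adj.1 h with ⟨hp, he⟩ | ⟨hq, he⟩
  · rw [seqCoverParity, seqCoverParity, ← he]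
    rcases pathGraph_adj.1 hp with h | h <;> rw [← h] <;> push_cast <;> grind
  · obtain ⟨i, hi⟩ := qc_adj_iff.1 hq
    have hik : i ≠ k := by rintro rfl; exact hz (Prod.ext he.symm hi)
    rw [seqCoverParity, seqCoverParity, ← he, hi, coverParity_flipCoord_of_ne hik]
    ring

end Product

section Forward

variable {m d : ℕ} {k : Fin d} {q : ZMod 2} {u v : Fin m × (Fin d → Bool)}
  {p : (pathGraph m □ Qc d).Walk u v}

lemma card_seqCoverParity_eq (hd : 2 ≤ d) (k : Fin d) (q : ZMod 2) :
    #{w : Fin m × (Fin d → Bool) | seqCoverParity k w = q} =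
      #{w : Fin m × (Fin d → Bool) | seqCoverParity k w ≠ q} := by
  have : Nontrivial (Fin d) := Fin.nontrivial_iff_two_le.2 hd
  obtain ⟨j, hjk⟩ := exists_ne k
  have hτ : Function.Involutive fun w : Fin m × (Fin d → Bool) => (w.1, flipCoord w.2 j) :=
    fun w => by simp
  refine card_equiv hτ.toPerm fun w => ?_
  simp only [mem_filter, mem_univ, true_and, Function.Involutive.coe_toPerm]
  rw [seqCoverParity, seqCoverParity, coverParity_flipCoord_of_ne hjk, ← add_assoc]
  constructor
  · rintro rfl
    exact zmod_two_add_one_ne _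
  · intro h
    have := zmod_two_eq_add_one_of_ne h
    grind

lemma toSubgraph_adj_flipCoord (hS : ∀ e ∈ seqHalfLayer m d k q, e ∈ p.edges)
    {w : Fin m × (Fin d → Bool)} (hw : seqCoverParity k w = q) :
    p.toSubgraph.Adj w (w.1, flipCoord w.2 k) :=
  Walk.adj_toSubgraph_iff_mem_edges.2 (hS _ (hw ▸ mk_flipCoord_mem_seqHalfLayer k w))

lemma exists_toSubgraph_adj_seqCoverParity_eq (hp : p.IsHamiltonian)
    (hS : ∀ e ∈ seqHalfLayer m d k q, e ∈ p.edges) (hu : seqCoverParity k u = q)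
    (hv : seqCoverParity k v = q) {w : Fin m × (Fin d → Bool)} (hw : seqCoverParity k w ≠ q) :
    ∃ z, p.toSubgraph.Adj w z ∧ z ≠ u ∧ z ≠ v ∧ seqCoverParity k z = q := by
  obtain ⟨a, b, hab, hN⟩ := hp.isPath.exists_neighborSet_toSubgraph_eq_pair (hp.mem_support w)
    (by rintro rfl; exact hw hu) (by rintro rfl; exact hw hv)
  obtain ⟨z, hz, hzk⟩ : ∃ z, p.toSubgraph.Adj w z ∧ z ≠ (w.1, flipCoord w.2 k) := by
    have ha : p.toSubgraph.Adj w a := by simp [← Subgraph.mem_neighborSet, hN]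
    have hb : p.toSubgraph.Adj w b := by simp [← Subgraph.mem_neighborSet, hN]
    by_cases haw : a = (w.1, flipCoord w.2 k)
    · exact ⟨b, hb, fun h => hab (haw.trans h.symm)⟩
    · exact ⟨a, ha, haw⟩
  have hnot : ∀ x, seqCoverParity k x = q → w ≠ (x.1, flipCoord x.2 k) := fun x hx h =>
    hw (by rw [h, ← hx]; simp [seqCoverParity])
  refine ⟨z, hz, fun hzu => ?_, fun hzv => ?_, ?_⟩
  · rw [hzu] at hz
    exact hnot u hu
      (hp.isPath.eq_of_toSubgraph_adj_start hz.symm (toSubgraph_adj_flipCoord hS hu))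
  · rw [hzv] at hz
    exact hnot v hv
      (hp.isPath.eq_of_toSubgraph_adj_end hz.symm (toSubgraph_adj_flipCoord hS hv))
  · rw [seqCoverParity_of_adj (p.toSubgraph.adj_sub hz) hzk, zmod_two_eq_add_one_of_ne hw]
    grind

lemma eq_of_toSubgraph_adj_of_seqCoverParity_ne (hp : p.IsHamiltonian)
    (hS : ∀ e ∈ seqHalfLayer m d k q, e ∈ p.edges) {z : Fin m × (Fin d → Bool)}
    (hz : seqCoverParity k z = q) (hzu : z ≠ u) (hzv : z ≠ v) {w w' : Fin m × (Fin d → Bool)}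
    (hw : seqCoverParity k w ≠ q) (hw' : seqCoverParity k w' ≠ q) (h : p.toSubgraph.Adj w z)
    (h' : p.toSubgraph.Adj w' z) : w = w' := by
  obtain ⟨a, b, -, hN⟩ :=
    hp.isPath.exists_neighborSet_toSubgraph_eq_pair (hp.mem_support z) hzu hzv
  have hmem : ∀ x, p.toSubgraph.Adj z x → x = a ∨ x = b := fun x hx => by
    simpa [hN] using (Subgraph.mem_neighborSet _ _ _).2 hx
  have hne : ∀ x, seqCoverParity k x ≠ q → x ≠ (z.1, flipCoord z.2 k) := fun x hx h =>
    hx (by rw [h, ← hz]; simp [seqCoverParity])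
  have := hmem _ (toSubgraph_adj_flipCoord hS hz)
  have := hmem w h.symm
  have := hmem w' h'.symm
  have := hne w hw
  have := hne w' hw'
  grind

/-- The sequence of half-layers pairs up the covered vertices along the path. Each uncovered
vertex has a path-neighbour other than its partner, which is covered and not an end of the path;
a covered vertex is chosen at most once, since its partner is already one of its two
path-neighbours. So there are at most `N - 2` uncovered vertices, `N` being the number of covered
ones; but the two numbers are equal. -/
theorem not_coveredBy_seqHalfLayer_of_isHamiltonian (hd : 2 ≤ d) (huv : u ≠ v)
    (hp : p.IsHamiltonian) (hS : ∀ e ∈ seqHalfLayer m d k q, e ∈ p.edges)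
    (hu : coveredBy (seqHalfLayer m d k q) u) (hv : coveredBy (seqHalfLayer m d k q) v) :
    False := by
  classical
  rw [coveredBy_seqHalfLayer_iff] at hu hv
  have hcard := card_seqCoverParity_eq (m := m) hd k q
  set C : Finset (Fin m × (Fin d → Bool)) := {w | seqCoverParity k w = q}
  have hle :
      #{w : Fin m × (Fin d → Bool) | seqCoverParity k w ≠ q} ≤ #((C.erase u).erase v) := by
    refine card_le_card_of_forall_subsingleton (fun w z => p.toSubgraph.Adj w z)
      (fun w hw => ?_) (fun z hz w hw w' hw' => ?_)
    · obtain ⟨z, hz, hzu, hzv, hzq⟩ :=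
        exists_toSubgraph_adj_seqCoverParity_eq hp hS hu hv (mem_filter.1 hw).2
      exact ⟨z, by simp [C, hzu, hzv, hzq], hz⟩
    · simp only [C, mem_erase, mem_filter, mem_univ, true_and] at hz
      simp only [mem_filter, mem_univ, true_and, Set.mem_ofPred_eq] at hw hw'
      exact eq_of_toSubgraph_adj_of_seqCoverParity_ne hp hS hz.2.2 hz.2.1 hz.1 hw.1 hw'.1
        hw.2 hw'.2
  have hu' : u ∈ C := by simpa [C] using hu
  have hv' : v ∈ C.erase u := by simpa [C] using ⟨huv.symm, hv⟩
  have := card_erase_lt_of_mem hu'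
  have := card_erase_lt_of_mem hv'
  omega

end Forward

lemma SimpleGraph.Walk.IsHamiltonian.map_append_cons_map {V₁ V₂ V : Type*} [DecidableEq V₁]
    [DecidableEq V₂] [DecidableEq V] {G₁ : SimpleGraph V₁} {G₂ : SimpleGraph V₂}
    {G : SimpleGraph V} (f : G₁ ↪g G) (g : G₂ ↪g G) (hfg : IsCompl (Set.range f) (Set.range g))
    {a b : V₁} {c e : V₂} {p : G₁.Walk a b} {q : G₂.Walk c e} (hp : p.IsHamiltonian)
    (hq : q.IsHamiltonian) (h : G.Adj (f b) (g c)) :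
    ((p.map f.toHom).append (.cons h (q.map g.toHom))).IsHamiltonian := by
  intro t
  rw [Walk.support_append, Walk.support_cons, List.tail_cons, List.count_append,
    Walk.support_map, Walk.support_map, Embedding.coe_toHom, Embedding.coe_toHom]
  have hf : ∀ x, f x ∉ Set.range g := fun x hx => hfg.disjoint.ne_of_mem ⟨x, rfl⟩ hx rfl
  have hg : ∀ y, g y ∉ Set.range f := fun y hy => hfg.disjoint.ne_of_mem hy ⟨y, rfl⟩ rfl
  rcases hfg.codisjoint.top_le (Set.mem_univ t) with ⟨x, rfl⟩ | ⟨y, rfl⟩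
  · have : f x ∉ q.support.map g := fun hx => by
      obtain ⟨y, -, hy⟩ := List.mem_map.1 hx
      exact hf x ⟨y, hy⟩
    rw [List.count_map_of_injective _ _ f.injective, List.count_eq_zero_of_not_mem this, hp x]
  · have : g y ∉ p.support.map f := fun hy => by
      obtain ⟨x, -, hx⟩ := List.mem_map.1 hy
      exact hg y ⟨x, hx⟩
    rw [List.count_map_of_injective _ _ g.injective, List.count_eq_zero_of_not_mem this, hq y]

section Glue

variable {d : ℕ} {H : SimpleGraph (Fin d → Bool)}

@[simps]
def castSuccBoxProd (n : ℕ) (H : SimpleGraph (Fin d → Bool)) :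
    (pathGraph (n + 1) □ H) ↪g (pathGraph (n + 2) □ H) where
  toFun w := (w.1.castSucc, w.2)
  inj' v w h := by
    simp only [Prod.mk.injEq] at h
    exact Prod.ext (Fin.castSucc_injective _ h.1) h.2
  map_rel_iff' {v w} := by
    change (pathGraph (n + 2) □ H).Adj (v.1.castSucc, v.2) (w.1.castSucc, w.2) ↔ _
    simp [boxProd_adj, pathGraph_adj, Fin.ext_iff]

lemma ExtendsHamPath.boxProd_fin_one {Ms : Fin 1 → Set (Sym2 (Fin d → Bool))}
    {a b : Fin d → Bool} (h : ExtendsHamPath H (Ms 0) a b) :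
    ExtendsHamPath (pathGraph 1 □ H) (⋃ i, liftEdges i (Ms i)) (0, a) (0, b) := by
  obtain ⟨p, hp, hpM⟩ := h
  set g := boxProdRight (pathGraph 1) H 0
  have hbij : Function.Bijective g :=
    ⟨g.injective, fun w => ⟨w.2, Prod.ext (Subsingleton.elim _ _) rfl⟩⟩
  suffices ExtendsHamPath (pathGraph 1 □ H) (⋃ i, liftEdges i (Ms i)) (g.toHom a) (g.toHom b)
    from this
  refine ⟨p.map g.toHom, hp.map _ hbij, fun e he => ?_⟩
  obtain ⟨i, e₀, he₀, rfl⟩ := Set.mem_iUnion.1 he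
  obtain rfl := Subsingleton.elim i 0
  rw [Walk.edges_map]
  exact List.mem_map_of_mem (hpM e₀ he₀)

lemma ExtendsHamPath.snoc {n : ℕ} {Ms : Fin (n + 2) → Set (Sym2 (Fin d → Bool))}
    {x : Fin (n + 1) × (Fin d → Bool)} {a b : Fin d → Bool}
    (hL : ExtendsHamPath (pathGraph (n + 1) □ H) (⋃ i, liftEdges i (Ms i.castSucc)) x
      (Fin.last n, a))
    (hR : ExtendsHamPath H (Ms (Fin.last (n + 1))) a b) :
    ExtendsHamPath (pathGraph (n + 2) □ H) (⋃ i, liftEdges i (Ms i)) (x.1.castSucc, x.2)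
      (Fin.last (n + 1), b) := by
  obtain ⟨p, hp, hpM⟩ := hL
  obtain ⟨q, hq, hqM⟩ := hR
  set f := castSuccBoxProd n H
  set g := boxProdRight (pathGraph (n + 2)) H (Fin.last (n + 1))
  have hadj : (pathGraph (n + 2) □ H).Adj (f.toHom (Fin.last n, a)) (g.toHom a) :=
    boxProd_adj.2 (Or.inl ⟨pathGraph_adj.2 (Or.inl (by simp [f, g])), rfl⟩)
  suffices ExtendsHamPath (pathGraph (n + 2) □ H) (⋃ i, liftEdges i (Ms i)) (f.toHom x)
      (g.toHom b) from this
  have hfg : IsCompl (Set.range f) (Set.range g) := by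
    refine ⟨Set.disjoint_left.2 ?_, codisjoint_iff.2 (Set.eq_univ_of_forall fun ⟨i, y⟩ => ?_)⟩
    · rintro _ ⟨v, rfl⟩ ⟨y, hy⟩
      simp only [f, g, boxProdRight_apply, castSuccBoxProd_apply, Prod.mk.injEq, Fin.ext_iff,
        Fin.val_last, Fin.val_castSucc] at hy
      omega
    · induction i using Fin.lastCases with
      | last => exact Or.inr ⟨y, rfl⟩
      | cast i => exact Or.inl ⟨(i, y), rfl⟩
  refine ⟨_, hp.map_append_cons_map f g hfg hq hadj, fun e he => ?_⟩
  · obtain ⟨i, e₀, he₀, rfl⟩ := Set.mem_iUnion.1 he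
    rw [Walk.edges_append, List.mem_append, Walk.edges_cons, Walk.edges_map,
      Walk.edges_map]
    induction i using Fin.lastCases with
    | last => exact Or.inr (List.mem_cons_of_mem _ (List.mem_map_of_mem (hqM e₀ he₀)))
    | cast i =>
      left
      convert List.mem_map_of_mem (f := Sym2.map f.toHom)
        (hpM _ (Set.mem_iUnion.2 ⟨i, e₀, he₀, rfl⟩)) using 1
      rw [Sym2.map_map]
      rfl

end Glue

section Backward

variable {d : ℕ}

open scoped Classical in
/-- `coverParity k x` is the global parity of the sequence of half-layers in direction `k` that
covers `(0, x)`. -/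
noncomputable def seqCoverDirs {m : ℕ} (Ms : Fin m → Set (Sym2 (Fin d → Bool)))
    (x : Fin d → Bool) : Finset (Fin d) :=
  {k | seqHalfLayer m d k (coverParity k x) ⊆ ⋃ i, liftEdges i (Ms i)}

lemma mem_seqCoverDirs {m : ℕ} {Ms : Fin m → Set (Sym2 (Fin d → Bool))} {x : Fin d → Bool}
    {k : Fin d} :
    k ∈ seqCoverDirs Ms x ↔ seqHalfLayer m d k (coverParity k x) ⊆ ⋃ i, liftEdges i (Ms i) := by
  simp [seqCoverDirs]

lemma seqCoverDirs_subset_coverDirs {n : ℕ} (Ms : Fin (n + 1) → Set (Sym2 (Fin d → Bool)))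
    (x : Fin d → Bool) : seqCoverDirs Ms x ⊆ coverDirs (Ms 0) x := fun k hk => by
  simpa [mem_coverDirs] using seqHalfLayer_subset_iff.1 (mem_seqCoverDirs.1 hk) 0

lemma seqCoverDirs_fin_one (Ms : Fin 1 → Set (Sym2 (Fin d → Bool))) (x : Fin d → Bool) :
    seqCoverDirs Ms x = coverDirs (Ms 0) x := by
  ext k
  rw [mem_seqCoverDirs, mem_coverDirs, seqHalfLayer_subset_iff, Fin.forall_fin_one]
  simp

theorem extendsHamPath_of_forall_init (hd : 5 ≤ d) (hB : ConjB d) {n : ℕ}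
    {Ms : Fin (n + 2) → Set (Sym2 (Fin d → Bool))} (hMs : ∀ i, IsMatchingOn (Qc d) (Ms i))
    {x y : Fin d → Bool}
    (hno : ¬ ∃ (k : Fin d) (p : ZMod 2),
      seqHalfLayer (n + 2) d k p ⊆ (⋃ i, liftEdges i (Ms i)) ∧
      coveredBy (seqHalfLayer (n + 2) d k p) (0, x) ∧
      coveredBy (seqHalfLayer (n + 2) d k p) (Fin.last (n + 1), y))
    (bad : Finset (Fin d → Bool))
    (hbad : #bad + 2 * #(seqCoverDirs (fun i => Ms i.castSucc) x) ≤ 2)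
    (hinit : ∀ a, wt a ≠ wt y → a ∉ bad →
      (∀ k ∈ seqCoverDirs (fun i => Ms i.castSucc) x, coverParity k a ≠ coverParity k x + n) →
      ExtendsHamPath (pathGraph (n + 1) □ Qc d) (⋃ i, liftEdges i (Ms i.castSucc)) (0, x)
        (Fin.last n, a)) :
    ExtendsHamPath (pathGraph (n + 2) □ Qc d) (⋃ i, liftEdges i (Ms i)) (0, x)
      (Fin.last (n + 1), y) := by
  obtain ⟨bad₁, hbad₁, hR⟩ := exists_noneC (by omega) (hMs (Fin.last (n + 1))) y
  have hcons : ∀ k ∈ seqCoverDirs (fun i => Ms i.castSucc) x,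
      k ∈ coverDirs (Ms (Fin.last (n + 1))) y → coverParity k x + n = coverParity k y := by
    intro k hk hky
    by_contra hne
    refine hno ⟨k, coverParity k x, seqHalfLayer_subset_iff.2 fun i => ?_, ?_, ?_⟩
    · induction i using Fin.lastCases with
      | last =>
        convert mem_coverDirs.1 hky using 2
        rw [zmod_two_eq_add_one_of_ne (Ne.symm hne)]
        rw [Fin.val_last]; push_cast; ring
      | cast i => simpa using seqHalfLayer_subset_iff.1 (mem_seqCoverDirs.1 hk) i
    · simp [coveredBy_seqHalfLayer_iff, seqCoverParity]
    · rw [coveredBy_seqHalfLayer_iff, seqCoverParity, zmod_two_eq_add_one_of_ne (Ne.symm hne)]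
      rw [Fin.val_last]; push_cast; grind
  obtain ⟨a, ha, ⟨haL, haL'⟩, haR, haR'⟩ :=
    exists_wt_eq_forall_coverParity_ne hd hbad hbad₁ hcons (wt y + 1)
  have hay : wt a ≠ wt y := ha ▸ zmod_two_add_one_ne _
  exact (hinit a hay haL haL').snoc ((hB _ (hMs _) a y hay).2 (hR a haR haR').2)

theorem extendsHamPath_of_not_exists_seqHalfLayer (hd : 5 ≤ d) (hB : ConjB d) (n : ℕ)
    (Ms : Fin (n + 2) → Set (Sym2 (Fin d → Bool))) (hMs : ∀ i, IsMatchingOn (Qc d) (Ms i))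
    (x y : Fin d → Bool) (hpar : gwt ((0 : Fin (n + 2)), x) ≠ gwt (Fin.last (n + 1), y))
    (hno : ¬ ∃ (k : Fin d) (p : ZMod 2),
      seqHalfLayer (n + 2) d k p ⊆ (⋃ i, liftEdges i (Ms i)) ∧
      coveredBy (seqHalfLayer (n + 2) d k p) (0, x) ∧
      coveredBy (seqHalfLayer (n + 2) d k p) (Fin.last (n + 1), y)) :
    ExtendsHamPath (pathGraph (n + 2) □ Qc d) (⋃ i, liftEdges i (Ms i)) (0, x)
      (Fin.last (n + 1), y) := by
  induction n generalizing y with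
  | zero =>
    obtain ⟨bad, hbad, hN⟩ := exists_noneC (by omega) (hMs (Fin.castSucc 0)) x
    refine extendsHamPath_of_forall_init hd hB hMs hno bad (by rwa [seqCoverDirs_fin_one])
      fun a hay ha hdirs => ExtendsHamPath.boxProd_fin_one ?_
    rw [seqCoverDirs_fin_one] at hdirs
    refine (hB _ (hMs _) x a fun h => hpar ?_).2 (hN a ha (by simpa using hdirs)).1
    simp [gwt, h, zmod_two_eq_add_one_of_ne hay, add_comm]
  | succ n ih =>
    refine extendsHamPath_of_forall_init hd hB hMs hno ∅ ?_ fun a hay _ hdirs =>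
      ih (fun i => Ms i.castSucc) (fun i => hMs _) a ?_ ?_
    · have := (card_le_card (seqCoverDirs_subset_coverDirs (fun i => Ms i.castSucc) x)).trans
        (card_coverDirs_le_one (hMs _) x)
      simp only [card_empty]
      omega
    · intro h
      apply hpar
      simp only [gwt, Fin.val_zero, Fin.val_last] at h ⊢
      rw [h, zmod_two_eq_add_one_of_ne hay]
      push_cast; ring
    · rintro ⟨k, p, hsub, hx, ha⟩
      rw [coveredBy_seqHalfLayer_iff] at hx ha
      simp only [seqCoverParity, Fin.val_zero, Nat.cast_zero, zero_add] at hx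
      subst hx
      rw [seqCoverParity, Fin.val_last] at ha
      exact hdirs k (mem_seqCoverDirs.2 hsub) (by push_cast at ha; grind)

end Backward

/-- Sequence lemma: in `G = P_m □ Q_d` (`m ≥ 2`, `d ≥ 5`) with a matching `Mᵢ` in each
canonical copy of `Q_d`, for `u` in the first copy and `v` in the last copy of opposite
global parity, assuming Conjecture B for dimension `d`, a Hamilton path of `G` between `u`
and `v` extending the union of the `Mᵢ` exists iff no sequence of half-layers contained in
that union covers both `u` and `v`. -/
theorem stmt8 (d m : ℕ) (hd : 5 ≤ d) (hm : 2 ≤ m)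
    (Ms : Fin m → Set (Sym2 (Fin d → Bool)))
    (hMs : ∀ i, IsMatchingOn (Qc d) (Ms i))
    (u v : Fin m × (Fin d → Bool)) (hu : u.1.val = 0) (hv : v.1.val = m - 1)
    (hpar : gwt u ≠ gwt v) (hB : ConjB d) :
    ExtendsHamPath (SimpleGraph.pathGraph m □ Qc d) (⋃ i, liftEdges i (Ms i)) u v ↔
      ¬ ∃ (k : Fin d) (p : ZMod 2),
        seqHalfLayer m d k p ⊆ (⋃ i, liftEdges i (Ms i)) ∧
        coveredBy (seqHalfLayer m d k p) u ∧ coveredBy (seqHalfLayer m d k p) v := by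
  constructor
  · rintro ⟨p, hp, hpM⟩ ⟨k, q, hsub, hcu, hcv⟩
    exact not_coveredBy_seqHalfLayer_of_isHamiltonian (by omega) (ne_of_apply_ne gwt hpar) hp
      (fun e he => hpM e (hsub he)) hcu hcv
  · obtain ⟨n, rfl⟩ : ∃ n, m = n + 2 := ⟨m - 2, by omega⟩
    obtain ⟨u1, x⟩ := u
    obtain ⟨v1, y⟩ := v
    obtain rfl : u1 = 0 := Fin.ext hu
    obtain rfl : v1 = Fin.last (n + 1) := Fin.ext hv
    exact extendsHamPath_of_not_exists_seqHalfLayer hd hB n Ms hMs x y hpar
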